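/- Let k, k' : [0,1] → ℝ be continuous and let N, N' > 0. Let f, g, h : [0,1] → ℝ be solutions on [0,1] of f'' + (k/N)f = 0, g'' + (k'/N')g = 0 and h'' + ((k+k')/(N+N'))h = 0 respectively, each with value 0 at 0 and value 1 at 1, and each positive on (0,1]. Then f(t)^{N}·g(t)^{N'} ≥ h(t)^{N+N'} for all t ∈ [0,1]. -/

import Mathlib

open Set

/-- `u` is a (twice continuously differentiable) solution of `u'' + κ·u = 0` on the set `s`,
with first and second derivative functions `u'` and `u''`. -/
def SturmSol (κ u u' u'' : ℝ → ℝ) (s : Set ℝ) : Prop :=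
  (∀ t ∈ s, HasDerivWithinAt u (u' t) s t) ∧
  (∀ t ∈ s, HasDerivWithinAt u' (u'' t) s t) ∧
  ContinuousOn u'' s ∧
  (∀ t ∈ s, u'' t + κ t * u t = 0)

open Real

/-!
Put `α = N/(N+N')`, `β = N'/(N+N')` and `κ = (k+k')/(N+N') = α·k/N + β·k'/N'`. The logarithmic
derivatives `v = f'/f`, `w = g'/g` solve the Riccati equations `v' = -k/N - v²`, `w' = -k'/N' - w²`,
so the geometric mean `φ = f^α g^β = exp (α log f + β log g)` satisfies
`φ'' + κφ = -αβ(v - w)²φ ≤ 0`: it is a supersolution of the equation solved by `h`.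

Sturm comparison then gives `h ≤ φ`. The Wronskian `W = φ'h - φh'` has `W' = (φ'' + κφ)h ≤ 0`.
If `W(t) = c > 0`, then `(φ/h)' = W/h² ≥ c/(Mx)²` on `(0, t]`, where `h(x) ≤ Mx` because
`h(0) = 0`; this is not integrable at `0`, contradicting `φ/h ≥ 0`. Hence `W ≤ 0` on `(0,1]`,
`φ/h` is antitone there and `φ/h ≥ φ(1)/h(1) = 1`. Raising `h ≤ φ` to the power `N + N'` gives
the claim.
-/

def SturmSupersol (κ u : ℝ → ℝ) (s : Set ℝ) : Prop :=
  ∃ u' u'' : ℝ → ℝ, (∀ t ∈ s, HasDerivWithinAt u (u' t) s t) ∧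
    (∀ t ∈ s, HasDerivWithinAt u' (u'' t) s t) ∧ ∀ t ∈ s, u'' t + κ t * u t ≤ 0

section Monotonicity

variable {D : Set ℝ} {F F' : ℝ → ℝ}

theorem Convex.monotoneOn_of_hasDerivWithinAt_nonneg (hD : Convex ℝ D)
    (hF : ∀ x ∈ D, HasDerivWithinAt F (F' x) D x) (hF' : ∀ x ∈ interior D, 0 ≤ F' x) :
    MonotoneOn F D :=
  _root_.monotoneOn_of_hasDerivWithinAt_nonneg hD (fun x hx => (hF x hx).continuousWithinAt)
    (fun x hx => (hF x (interior_subset hx)).mono interior_subset) hF'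

theorem Convex.antitoneOn_of_hasDerivWithinAt_nonpos (hD : Convex ℝ D)
    (hF : ∀ x ∈ D, HasDerivWithinAt F (F' x) D x) (hF' : ∀ x ∈ interior D, F' x ≤ 0) :
    AntitoneOn F D :=
  _root_.antitoneOn_of_hasDerivWithinAt_nonpos hD (fun x hx => (hF x hx).continuousWithinAt)
    (fun x hx => (hF x (interior_subset hx)).mono interior_subset) hF'

end Monotonicity

theorem exists_abs_le_mul_of_hasDerivWithinAt {u u' : ℝ → ℝ} {b : ℝ}
    (hu : ∀ t ∈ Icc 0 b, HasDerivWithinAt u (u' t) (Icc 0 b) t) (hu' : ContinuousOn u' (Icc 0 b))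
    (hu0 : u 0 = 0) : ∃ M, ∀ t ∈ Icc 0 b, |u t| ≤ M * t := by
  obtain ⟨M, hM⟩ := isCompact_Icc.exists_bound_of_continuousOn hu'
  refine ⟨M, fun t ht => ?_⟩
  have := Convex.norm_image_sub_le_of_norm_hasDerivWithin_le hu hM (convex_Icc 0 b)
    (left_mem_Icc.2 (ht.1.trans ht.2)) ht
  rwa [hu0, sub_zero, sub_zero, Real.norm_eq_abs, Real.norm_eq_abs, abs_of_nonneg ht.1] at this

namespace SturmSol

variable {κ u u' u'' : ℝ → ℝ} {s : Set ℝ}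

theorem mono (hu : SturmSol κ u u' u'' s) {s' : Set ℝ} (hs : s' ⊆ s) : SturmSol κ u u' u'' s' :=
  ⟨fun t ht => (hu.1 t (hs ht)).mono hs, fun t ht => (hu.2.1 t (hs ht)).mono hs, hu.2.2.1.mono hs,
    fun t ht => hu.2.2.2 t (hs ht)⟩

theorem hasDerivWithinAt_logDeriv (hu : SturmSol κ u u' u'' s) {t : ℝ} (ht : t ∈ s)
    (hut : u t ≠ 0) :
    HasDerivWithinAt (fun x => u' x / u x) (-κ t - (u' t / u t) ^ 2) s t := by
  refine ((hu.2.1 t ht).div (hu.1 t ht) hut).congr_deriv ?_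
  field_simp
  linear_combination u t * hu.2.2.2 t ht

end SturmSol

theorem sturmSupersol_exp {κ ℓ L L' : ℝ → ℝ} {s : Set ℝ}
    (hℓ : ∀ t ∈ s, HasDerivWithinAt ℓ (L t) s t) (hL : ∀ t ∈ s, HasDerivWithinAt L (L' t) s t)
    (hRiccati : ∀ t ∈ s, L' t + L t ^ 2 + κ t ≤ 0) :
    SturmSupersol κ (fun t => exp (ℓ t)) s := by
  refine ⟨fun t => exp (ℓ t) * L t, fun t => exp (ℓ t) * (L' t + L t ^ 2),
    fun t ht => (hℓ t ht).exp, fun t ht => ?_, fun t ht => ?_⟩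
  · refine ((hℓ t ht).exp.mul (hL t ht)).congr_deriv ?_
    ring
  · calc exp (ℓ t) * (L' t + L t ^ 2) + κ t * exp (ℓ t) = exp (ℓ t) * (L' t + L t ^ 2 + κ t) := by
          ring
      _ ≤ 0 := mul_nonpos_of_nonneg_of_nonpos (exp_pos _).le (hRiccati t ht)

theorem SturmSol.sturmSupersol_geomMean {a b f f₁ f₂ g g₁ g₂ : ℝ → ℝ} {s : Set ℝ} {α β : ℝ}
    (hf : SturmSol a f f₁ f₂ s) (hg : SturmSol b g g₁ g₂ s)
    (hfpos : ∀ t ∈ s, 0 < f t) (hgpos : ∀ t ∈ s, 0 < g t)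
    (hα : 0 ≤ α) (hβ : 0 ≤ β) (hαβ : α + β = 1) :
    SturmSupersol (fun t => α * a t + β * b t)
      (fun t => exp (α * log (f t) + β * log (g t))) s := by
  refine sturmSupersol_exp (L := fun t => α * (f₁ t / f t) + β * (g₁ t / g t))
    (L' := fun t => α * (-a t - (f₁ t / f t) ^ 2) + β * (-b t - (g₁ t / g t) ^ 2))
    (fun t ht => (((hf.1 t ht).log (hfpos t ht).ne').const_mul α).add
      (((hg.1 t ht).log (hgpos t ht).ne').const_mul β))
    (fun t ht => ((hf.hasDerivWithinAt_logDeriv ht (hfpos t ht).ne').const_mul α).add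
      ((hg.hasDerivWithinAt_logDeriv ht (hgpos t ht).ne').const_mul β))
    fun t _ => ?_
  set v := f₁ t / f t
  set w := g₁ t / g t
  obtain rfl : β = 1 - α := by linarith
  have hdefect : α * (-a t - v ^ 2) + (1 - α) * (-b t - w ^ 2) + (α * v + (1 - α) * w) ^ 2
      + (α * a t + (1 - α) * b t) = -(α * (1 - α) * (v - w) ^ 2) := by ring
  simp only [hdefect, neg_nonpos]
  positivity

theorem antitoneOn_wronskian {κ φ φ₁ φ₂ h h₁ h₂ : ℝ → ℝ} {s : Set ℝ} (hs : Convex ℝ s)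
    (hφ : ∀ t ∈ s, HasDerivWithinAt φ (φ₁ t) s t) (hφ₁ : ∀ t ∈ s, HasDerivWithinAt φ₁ (φ₂ t) s t)
    (hφκ : ∀ t ∈ s, φ₂ t + κ t * φ t ≤ 0) (hh : SturmSol κ h h₁ h₂ s)
    (hh_nonneg : ∀ t ∈ s, 0 ≤ h t) :
    AntitoneOn (fun t => φ₁ t * h t - φ t * h₁ t) s := by
  refine hs.antitoneOn_of_hasDerivWithinAt_nonpos (F' := fun t => (φ₂ t + κ t * φ t) * h t)
    (fun t ht => ?_) fun t ht =>
      mul_nonpos_of_nonpos_of_nonneg (hφκ t (interior_subset ht)) (hh_nonneg t (interior_subset ht))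
  refine (((hφ₁ t ht).mul (hh.1 t ht)).sub ((hφ t ht).mul (hh.2.1 t ht))).congr_deriv ?_
  linear_combination -φ t * hh.2.2.2 t ht

theorem wronskian_nonpos_of_antitoneOn {φ φ₁ h h₁ : ℝ → ℝ} {b M : ℝ}
    (hφ : ∀ t ∈ Ioc 0 b, HasDerivWithinAt φ (φ₁ t) (Ioc 0 b) t)
    (hh : ∀ t ∈ Ioc 0 b, HasDerivWithinAt h (h₁ t) (Ioc 0 b) t)
    (hφ_nonneg : ∀ t ∈ Ioc 0 b, 0 ≤ φ t) (hhpos : ∀ t ∈ Ioc 0 b, 0 < h t)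
    (hhM : ∀ t ∈ Ioc 0 b, h t ≤ M * t)
    (hW : AntitoneOn (fun t => φ₁ t * h t - φ t * h₁ t) (Ioc 0 b)) {t : ℝ} (ht : t ∈ Ioc 0 b) :
    φ₁ t * h t - φ t * h₁ t ≤ 0 := by
  set W : ℝ → ℝ := fun x => φ₁ x * h x - φ x * h₁ x
  by_contra! hc
  have hM : 0 < M := pos_of_mul_pos_left ((hhpos t ht).trans_le (hhM t ht)) ht.1.le
  have hsub : Ioc 0 t ⊆ Ioc 0 b := Ioc_subset_Ioc_right ht.2
  set ψ : ℝ → ℝ := fun x => φ x / h x + W t / M ^ 2 * x⁻¹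
  have hψ : MonotoneOn ψ (Ioc 0 t) := by
    refine (convex_Ioc 0 t).monotoneOn_of_hasDerivWithinAt_nonneg
      (F' := fun x => W x / h x ^ 2 - W t / M ^ 2 * (x ^ 2)⁻¹) (fun x hx => ?_) fun x hx => ?_
    · refine ((((hφ x (hsub hx)).mono hsub).div ((hh x (hsub hx)).mono hsub)
        (hhpos x (hsub hx)).ne').add
        (((hasDerivAt_inv hx.1.ne').const_mul (W t / M ^ 2)).hasDerivWithinAt)).congr_deriv ?_
      ring
    · rw [interior_Ioc] at hx
      have hx' : x ∈ Ioc 0 b := hsub (Ioo_subset_Ioc_self hx)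
      have hWx : W t ≤ W x := hW hx' ht hx.2.le
      have hsq : h x ^ 2 ≤ (M * x) ^ 2 := pow_le_pow_left₀ (hhpos x hx').le (hhM x hx') 2
      have hhx := hhpos x hx'
      rw [sub_nonneg]
      calc W t / M ^ 2 * (x ^ 2)⁻¹ = W t / (M * x) ^ 2 := by ring
        _ ≤ W t / h x ^ 2 := div_le_div_of_nonneg_left hc.le (by positivity) hsq
        _ ≤ W x / h x ^ 2 := div_le_div_of_nonneg_right hWx (by positivity)
  obtain ⟨x, hlt, hx⟩ := (((tendsto_inv_nhdsGT_zero.const_mul_atTop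
    (div_pos hc (pow_pos hM 2))).eventually_gt_atTop (ψ t)).and (Ioc_mem_nhdsGT ht.1)).exists
  have hψx : W t / M ^ 2 * x⁻¹ ≤ ψ x :=
    le_add_of_nonneg_left (div_nonneg (hφ_nonneg x (hsub hx)) (hhpos x (hsub hx)).le)
  linarith [hψ hx (right_mem_Ioc.2 ht.1) hx.2]

theorem SturmSupersol.div_le_div_of_sturmSol {κ φ h h₁ h₂ : ℝ → ℝ} {b : ℝ}
    (hφ : SturmSupersol κ φ (Ioc 0 b)) (hh : SturmSol κ h h₁ h₂ (Icc 0 b)) (hh0 : h 0 = 0)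
    (hφ_nonneg : ∀ t ∈ Ioc 0 b, 0 ≤ φ t) (hhpos : ∀ t ∈ Ioc 0 b, 0 < h t) {t : ℝ}
    (ht : t ∈ Ioc 0 b) :
    φ b / h b ≤ φ t / h t := by
  obtain ⟨φ₁, φ₂, hφ₁, hφ₂, hφκ⟩ := hφ
  have hh' := hh.mono Ioc_subset_Icc_self
  obtain ⟨M, hM⟩ := exists_abs_le_mul_of_hasDerivWithinAt hh.1
    (fun x hx => (hh.2.1 x hx).continuousWithinAt) hh0
  have hW := antitoneOn_wronskian (convex_Ioc 0 b) hφ₁ hφ₂ hφκ hh' fun x hx => (hhpos x hx).le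
  have hq : AntitoneOn (fun x => φ x / h x) (Ioc 0 b) :=
    (convex_Ioc 0 b).antitoneOn_of_hasDerivWithinAt_nonpos
      (fun x hx => (hφ₁ x hx).div (hh'.1 x hx) (hhpos x hx).ne') fun x hx =>
        div_nonpos_of_nonpos_of_nonneg (wronskian_nonpos_of_antitoneOn hφ₁ hh'.1 hφ_nonneg hhpos
          (fun y hy => (le_abs_self _).trans (hM y (Ioc_subset_Icc_self hy))) hW
          (interior_subset hx)) (sq_nonneg _)
  exact hq ht (right_mem_Ioc.2 (ht.1.trans_le ht.2)) ht.2

theorem rpow_add_le_mul_rpow_of_le_exp {x y z N N' : ℝ} (hx : 0 < x) (hy : 0 < y) (hz : 0 ≤ z)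
    (hN : 0 < N + N') (h : z ≤ exp (N / (N + N') * log x + N' / (N + N') * log y)) :
    z ^ (N + N') ≤ x ^ N * y ^ N' :=
  calc z ^ (N + N') ≤ exp (N / (N + N') * log x + N' / (N + N') * log y) ^ (N + N') :=
        rpow_le_rpow hz h hN.le
    _ = x ^ N * y ^ N' := by
        rw [← exp_mul, rpow_def_of_pos hx, rpow_def_of_pos hy, ← exp_add]
        congr 1
        field_simp

theorem distortion_multiplicative_general
    (k k' : ℝ → ℝ)
    (N N' : ℝ) (hN : 0 < N) (hN' : 0 < N')
    (f f₁ f₂ g g₁ g₂ h h₁ h₂ : ℝ → ℝ)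
    (hf : SturmSol (fun t => k t / N) f f₁ f₂ (Icc 0 1))
    (hg : SturmSol (fun t => k' t / N') g g₁ g₂ (Icc 0 1))
    (hh : SturmSol (fun t => (k t + k' t) / (N + N')) h h₁ h₂ (Icc 0 1))
    (hf0 : f 0 = 0) (hf1 : f 1 = 1) (hfpos : ∀ t ∈ Ioc (0:ℝ) 1, 0 < f t)
    (hg0 : g 0 = 0) (hg1 : g 1 = 1) (hgpos : ∀ t ∈ Ioc (0:ℝ) 1, 0 < g t)
    (hh0 : h 0 = 0) (hh1 : h 1 = 1) (hhpos : ∀ t ∈ Ioc (0:ℝ) 1, 0 < h t) :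
    ∀ t ∈ Icc (0:ℝ) 1, h t ^ (N + N') ≤ f t ^ N * g t ^ N' := by
  have hS : 0 < N + N' := add_pos hN hN'
  rintro t ⟨ht0, ht1⟩
  rcases ht0.eq_or_lt with rfl | ht0
  · rw [hh0, hf0, hg0, zero_rpow hS.ne', zero_rpow hN.ne', zero_rpow hN'.ne', mul_zero]
  have ht : t ∈ Ioc (0:ℝ) 1 := ⟨ht0, ht1⟩
  have hκ : (fun x => (k x + k' x) / (N + N')) =
      fun x => N / (N + N') * (k x / N) + N' / (N + N') * (k' x / N') := by
    field_simp
  have hφ : SturmSupersol (fun x => (k x + k' x) / (N + N'))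
      (fun x => exp (N / (N + N') * log (f x) + N' / (N + N') * log (g x))) (Ioc 0 1) := by
    rw [hκ]
    exact (hf.mono Ioc_subset_Icc_self).sturmSupersol_geomMean (hg.mono Ioc_subset_Icc_self)
      hfpos hgpos (by positivity) (by positivity) (by field_simp)
  have hcmp := hφ.div_le_div_of_sturmSol hh hh0 (fun x _ => (exp_pos _).le) hhpos ht
  simp only [hf1, hg1, hh1, log_one, mul_zero, add_zero, exp_zero, div_one] at hcmp
  exact rpow_add_le_mul_rpow_of_le_exp (hfpos t ht) (hgpos t ht) (hhpos t ht).le hS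
    ((one_le_div (hhpos t ht)).1 hcmp)

/-- Multiplicativity inequality `σ_{k,N}^{(t)}{}^N · σ_{k',N'}^{(t)}{}^{N'} ≥
σ_{k+k',N+N'}^{(t)}{}^{N+N'}` for the distortion coefficients. -/
theorem distortion_multiplicative
    (k k' : ℝ → ℝ)
    (hk : ContinuousOn k (Icc 0 1)) (hk' : ContinuousOn k' (Icc 0 1))
    (N N' : ℝ) (hN : 0 < N) (hN' : 0 < N')
    (f f₁ f₂ g g₁ g₂ h h₁ h₂ : ℝ → ℝ)
    (hf : SturmSol (fun t => k t / N) f f₁ f₂ (Icc 0 1))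
    (hg : SturmSol (fun t => k' t / N') g g₁ g₂ (Icc 0 1))
    (hh : SturmSol (fun t => (k t + k' t) / (N + N')) h h₁ h₂ (Icc 0 1))
    (hf0 : f 0 = 0) (hf1 : f 1 = 1) (hfpos : ∀ t ∈ Ioc (0:ℝ) 1, 0 < f t)
    (hg0 : g 0 = 0) (hg1 : g 1 = 1) (hgpos : ∀ t ∈ Ioc (0:ℝ) 1, 0 < g t)
    (hh0 : h 0 = 0) (hh1 : h 1 = 1) (hhpos : ∀ t ∈ Ioc (0:ℝ) 1, 0 < h t) :
    ∀ t ∈ Icc (0:ℝ) 1, h t ^ (N + N') ≤ f t ^ N * g t ^ N' :=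
  distortion_multiplicative_general k k' N N' hN hN' f f₁ f₂ g g₁ g₂ h h₁ h₂ hf hg hh hf0 hf1 hfpos
    hg0 hg1 hgpos hh0 hh1 hhpos
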